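/- arXiv:2605.25608 — 2 statements merged into one kernel-verified Lean document; each statement's English description precedes it below -/
import Mathlib

section
/- Every function in the class NN(W, D, K) can be realized by ReLU network parameters θ = ((A_ℓ, b_ℓ)_{ℓ=0}^{D−1}, A_D) of depth D and layer widths at most W such that ‖A_D‖_F ≤ K and √(‖A_ℓ‖_F² + ‖b_ℓ‖_2²) ≤ 1 for every ℓ = 0, …, D−1, without changing the realized function. -/
open scoped BigOperators

noncomputable section

/-- ReLU activation. -/
def relu (t : ℝ) : ℝ := max 0 t

/-- Squared Frobenius norm of a matrix. -/
def frobSq {m n : ℕ} (A : Matrix (Fin m) (Fin n) ℝ) : ℝ := ∑ i, ∑ j, (A i j) ^ 2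

/-- Frobenius norm of a matrix. -/
def frob {m n : ℕ} (A : Matrix (Fin m) (Fin n) ℝ) : ℝ := Real.sqrt (frobSq A)

/-- Squared Euclidean norm of a vector. -/
def sqNorm {n : ℕ} (v : Fin n → ℝ) : ℝ := ∑ i, (v i) ^ 2

/-- A ReLU network of depth `D`, input dimension `d` and output dimension `k`:
layer widths `N 0 = d, N 1, …, N D, N (D+1) = k`, weight matrices `A ℓ` and biases `b ℓ`. -/
structure ReluNetwork (D d k : ℕ) where
  N : ℕ → ℕ
  hN0 : N 0 = d
  hNlast : N (D + 1) = k
  A : (ℓ : ℕ) → Matrix (Fin (N (ℓ + 1))) (Fin (N ℓ)) ℝ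
  b : (ℓ : ℕ) → Fin (N (ℓ + 1)) → ℝ

namespace ReluNetwork

variable {D d k : ℕ}

/-- Output of the `ℓ`-th hidden layer (after the ReLU). -/
def layer (net : ReluNetwork D d k) : (ℓ : ℕ) → (Fin d → ℝ) → Fin (net.N ℓ) → ℝ
  | 0 => fun x i => x (Fin.cast net.hN0 i)
  | (ℓ + 1) => fun x i =>
      relu ((∑ j, net.A ℓ i j * net.layer ℓ x j) + net.b ℓ i)

/-- The function realized by the network:
`f_θ(x) = A_D σ(A_{D-1} σ( ⋯ σ(A_0 x + b_0) ⋯ ) + b_{D-1})`. -/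
def realize (net : ReluNetwork D d k) (x : Fin d → ℝ) : Fin k → ℝ :=
  fun i => ∑ j, net.A D (Fin.cast net.hNlast.symm i) j * net.layer D x j

/-- Multiplicative Frobenius norm constraint
`κ(θ) = ‖A_D‖_F ∏_{ℓ<D} √(‖A_ℓ‖_F² + ‖b_ℓ‖² + 1)`. -/
def kappa (net : ReluNetwork D d k) : ℝ :=
  frob (net.A D) *
    ∏ ℓ ∈ Finset.range D, Real.sqrt (frobSq (net.A ℓ) + sqNorm (net.b ℓ) + 1)

/-- All (hidden) layer widths are at most `W`. -/
def widthLe (net : ReluNetwork D d k) (W : ℕ) : Prop :=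
  ∀ ℓ, 0 < ℓ → ℓ ≤ D → net.N ℓ ≤ W

end ReluNetwork

/-- The norm-constrained class `NN(W, D, K)` of functions `ℝ^d → ℝ^k` realized by depth-`D`
ReLU networks with all layer widths at most `W` and `κ(θ) ≤ K`. -/
def NNclass (d k W D : ℕ) (K : ℝ) : Set ((Fin d → ℝ) → Fin k → ℝ) :=
  {f | ∃ net : ReluNetwork D d k, net.widthLe W ∧ net.kappa ≤ K ∧ net.realize = f}

/-! With `c ℓ = √(‖A_ℓ‖_F² + ‖b_ℓ‖² + 1) ≥ 1`, divide `A_ℓ` by `c ℓ` and `b_ℓ` by `c 0 ⋯ c ℓ`.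
By positive homogeneity of ReLU, hidden layer `ℓ` then outputs the original one divided by
`c 0 ⋯ c (ℓ-1)`, so multiplying `A_D` by `c 0 ⋯ c (D-1)` restores the realized function and makes
`‖A_D‖_F = κ(θ) ≤ K`. Since `c 0 ⋯ c ℓ ≥ c ℓ`, the rescaled parameters satisfy
`‖A'_ℓ‖_F² + ‖b'_ℓ‖² ≤ (‖A_ℓ‖_F² + ‖b_ℓ‖²) / c ℓ² ≤ 1`. -/

open Finset

lemma frobSq_nonneg {m n : ℕ} (A : Matrix (Fin m) (Fin n) ℝ) : 0 ≤ frobSq A :=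
  sum_nonneg fun _ _ => sum_nonneg fun _ _ => sq_nonneg _

lemma sqNorm_nonneg {n : ℕ} (v : Fin n → ℝ) : 0 ≤ sqNorm v :=
  sum_nonneg fun _ _ => sq_nonneg _

lemma frobSq_smul {m n : ℕ} (a : ℝ) (A : Matrix (Fin m) (Fin n) ℝ) :
    frobSq (a • A) = a ^ 2 * frobSq A := by
  simp [frobSq, mul_pow, mul_sum]

lemma sqNorm_smul {n : ℕ} (a : ℝ) (v : Fin n → ℝ) : sqNorm (a • v) = a ^ 2 * sqNorm v := by
  simp [sqNorm, mul_pow, mul_sum]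

lemma frob_smul {m n : ℕ} (a : ℝ) (A : Matrix (Fin m) (Fin n) ℝ) :
    frob (a • A) = |a| * frob A := by
  rw [frob, frobSq_smul, Real.sqrt_mul (sq_nonneg a), Real.sqrt_sq_eq_abs, frob]

lemma relu_mul_of_nonneg {a : ℝ} (ha : 0 ≤ a) (t : ℝ) : relu (a * t) = a * relu t := by
  rw [relu, relu, mul_max_of_nonneg _ _ ha, mul_zero]

lemma inv_sq_mul_add_inv_sq_mul_le_one {a b c p : ℝ} (hb : 0 ≤ b) (hc : 0 < c)
    (hcp : c ≤ p) (habc : a + b ≤ c ^ 2) : c⁻¹ ^ 2 * a + p⁻¹ ^ 2 * b ≤ 1 := by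
  have hp : 0 < p := hc.trans_le hcp
  have hpc : p⁻¹ ^ 2 ≤ c⁻¹ ^ 2 := by gcongr
  calc c⁻¹ ^ 2 * a + p⁻¹ ^ 2 * b ≤ c⁻¹ ^ 2 * a + c⁻¹ ^ 2 * b := by gcongr
    _ ≤ c⁻¹ ^ 2 * c ^ 2 := by rw [← mul_add]; gcongr
    _ = 1 := by rw [← mul_pow, inv_mul_cancel₀ hc.ne', one_pow]

namespace ReluNetwork

variable {D d k : ℕ}

def rescale (net : ReluNetwork D d k) (c : ℕ → ℝ) : ReluNetwork D d k where
  N := net.N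
  hN0 := net.hN0
  hNlast := net.hNlast
  A ℓ := if ℓ < D then (c ℓ)⁻¹ • net.A ℓ else (∏ j ∈ range D, c j) • net.A ℓ
  b ℓ := (∏ j ∈ range (ℓ + 1), c j)⁻¹ • net.b ℓ

variable (net : ReluNetwork D d k) (c : ℕ → ℝ)

lemma rescale_A_of_lt {ℓ : ℕ} (hℓ : ℓ < D) : (net.rescale c).A ℓ = (c ℓ)⁻¹ • net.A ℓ :=
  if_pos hℓ

lemma rescale_A_self : (net.rescale c).A D = (∏ j ∈ range D, c j) • net.A D :=
  if_neg (lt_irrefl D)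

lemma rescale_A_apply_of_lt {ℓ : ℕ} (hℓ : ℓ < D) (i : Fin ((net.rescale c).N (ℓ + 1)))
    (j : Fin ((net.rescale c).N ℓ)) :
    (net.rescale c).A ℓ i j = (c ℓ)⁻¹ * net.A ℓ i j := by
  rw [net.rescale_A_of_lt c hℓ]
  rfl

lemma rescale_A_self_apply (i : Fin ((net.rescale c).N (D + 1))) (j : Fin ((net.rescale c).N D)) :
    (net.rescale c).A D i j = (∏ j ∈ range D, c j) * net.A D i j := by
  rw [net.rescale_A_self c]
  rfl

lemma frobSq_rescale_A_of_lt {ℓ : ℕ} (hℓ : ℓ < D) :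
    frobSq ((net.rescale c).A ℓ) = (c ℓ)⁻¹ ^ 2 * frobSq (net.A ℓ) :=
  (congrArg frobSq (net.rescale_A_of_lt c hℓ)).trans (frobSq_smul _ _)

lemma sqNorm_rescale_b (ℓ : ℕ) :
    sqNorm ((net.rescale c).b ℓ) = (∏ j ∈ range (ℓ + 1), c j)⁻¹ ^ 2 * sqNorm (net.b ℓ) :=
  sqNorm_smul _ _

lemma frob_rescale_A_self :
    frob ((net.rescale c).A D) = |∏ j ∈ range D, c j| * frob (net.A D) :=
  (congrArg frob (net.rescale_A_self c)).trans (frob_smul _ _)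

variable {c}

lemma layer_rescale (hc : ∀ ℓ, 0 < c ℓ) {ℓ : ℕ} (hℓ : ℓ ≤ D) (x : Fin d → ℝ)
    (i : Fin ((net.rescale c).N ℓ)) :
    (net.rescale c).layer ℓ x i = (∏ j ∈ range ℓ, c j)⁻¹ * net.layer ℓ x i := by
  induction ℓ with
  | zero => simp [layer, rescale]
  | succ ℓ ih =>
    have hP : 0 ≤ (∏ j ∈ range (ℓ + 1), c j)⁻¹ := by
      have := prod_pos fun j (_ : j ∈ range (ℓ + 1)) => hc j
      positivity
    have hpre : (∑ j, (net.rescale c).A ℓ i j * (net.rescale c).layer ℓ x j)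
          + (net.rescale c).b ℓ i
        = (∏ j ∈ range (ℓ + 1), c j)⁻¹ * ((∑ j, net.A ℓ i j * net.layer ℓ x j) + net.b ℓ i) := by
      rw [mul_add, mul_sum]
      congr 1
      refine sum_congr rfl fun j _ => ?_
      rw [net.rescale_A_apply_of_lt c (by omega : ℓ < D), ih (by omega) j, prod_range_succ, mul_inv]
      ring
    show relu _ = _
    rw [hpre, relu_mul_of_nonneg hP]
    rfl

lemma realize_rescale (hc : ∀ ℓ, 0 < c ℓ) : (net.rescale c).realize = net.realize := by
  have hP : (∏ j ∈ range D, c j) ≠ 0 := (prod_pos fun j _ => hc j).ne'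
  funext x i
  refine sum_congr rfl fun j _ => ?_
  rw [rescale_A_self_apply, net.layer_rescale hc le_rfl x j,
    mul_mul_mul_comm, mul_inv_cancel₀ hP, one_mul]
  rfl

def layerNorm (ℓ : ℕ) : ℝ := Real.sqrt (frobSq (net.A ℓ) + sqNorm (net.b ℓ) + 1)

lemma one_le_layerNorm (ℓ : ℕ) : 1 ≤ net.layerNorm ℓ :=
  Real.one_le_sqrt.mpr (by linarith [frobSq_nonneg (net.A ℓ), sqNorm_nonneg (net.b ℓ)])

lemma layerNorm_pos (ℓ : ℕ) : 0 < net.layerNorm ℓ :=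
  one_pos.trans_le (net.one_le_layerNorm ℓ)

lemma frob_rescale_layerNorm_A_self : frob ((net.rescale net.layerNorm).A D) = net.kappa := by
  rw [frob_rescale_A_self, abs_of_pos (prod_pos fun j _ => net.layerNorm_pos j), kappa, mul_comm]
  rfl

lemma sqrt_frobSq_add_sqNorm_rescale_layerNorm_le_one {ℓ : ℕ} (hℓ : ℓ < D) :
    Real.sqrt (frobSq ((net.rescale net.layerNorm).A ℓ) + sqNorm ((net.rescale net.layerNorm).b ℓ))
      ≤ 1 := by
  have hle : net.layerNorm ℓ ≤ ∏ j ∈ range (ℓ + 1), net.layerNorm j := by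
    rw [prod_range_succ]
    exact le_mul_of_one_le_left (net.layerNorm_pos ℓ).le
      (one_le_prod fun j _ => net.one_le_layerNorm j)
  have hsq : frobSq (net.A ℓ) + sqNorm (net.b ℓ) ≤ net.layerNorm ℓ ^ 2 := by
    rw [layerNorm, Real.sq_sqrt (by linarith [frobSq_nonneg (net.A ℓ), sqNorm_nonneg (net.b ℓ)])]
    linarith
  rw [Real.sqrt_le_one, frobSq_rescale_A_of_lt _ _ hℓ, sqNorm_rescale_b]
  exact inv_sq_mul_add_inv_sq_mul_le_one (sqNorm_nonneg _) (net.layerNorm_pos ℓ) hle hsq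

end ReluNetwork

/-- **Rescaling.** Every function in `NN(W, D, K)` can be realized by network
parameters of depth `D` and layer widths at most `W` such that `‖A_D‖_F ≤ K` and
`√(‖A_ℓ‖_F² + ‖b_ℓ‖₂²) ≤ 1` for every `ℓ = 0, …, D−1`, without changing the realized
function. -/
theorem rescaling_frobenius (d k W D : ℕ) (K : ℝ)
    (f : (Fin d → ℝ) → Fin k → ℝ) (hf : f ∈ NNclass d k W D K) :
    ∃ net : ReluNetwork D d k,
      net.widthLe W ∧
      net.realize = f ∧
      frob (net.A D) ≤ K ∧
      ∀ ℓ < D, Real.sqrt (frobSq (net.A ℓ) + sqNorm (net.b ℓ)) ≤ 1 := by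
  obtain ⟨net, hW, hK, rfl⟩ := hf
  exact ⟨net.rescale net.layerNorm, hW, net.realize_rescale net.layerNorm_pos,
    net.frob_rescale_layerNorm_A_self.trans_le hK,
    fun ℓ hℓ => net.sqrt_frobSq_add_sqNorm_rescale_layerNorm_le_one hℓ⟩
end
end

section
/- For every k ∈ ℕ with k ≥ 1, the function φ_k(x) = (1/k) ∑_{i=1}^k 2σ(x − (2i−1)/(2k)) satisfies: φ_k(x) = 0 for all x ≤ 0; φ_k(x) ∈ [0,1] for all x ∈ [0,1]; and |x² − φ_k(x)| ≤ 1/(2k²) for all x ∈ [0,1]. -/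
open scoped BigOperators

noncomputable section

/-- `φ_k(x) = (1/k) ∑_{i=1}^k 2 σ(x − (2i−1)/(2k))`, the midpoint Riemann-sum
approximation of `x² = ∫_0^1 2 σ(x − b) db`, where `σ(t) = max 0 t` is the ReLU. -/
def phiK (k : ℕ) (x : ℝ) : ℝ :=
  (1 / (k : ℝ)) * ∑ i ∈ Finset.Icc 1 k, 2 * max 0 (x - (2 * (i : ℝ) - 1) / (2 * (k : ℝ)))

/-!
On `[0,1]` exactly the first `m = ⌊kx + 1/2⌋` ReLUs are active (`m` is the nearest integer to
`kx`), and summing them gives the closed form `φ_k(x) = x² − (kx − m)²/k²`. Since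
`|kx − m| ≤ 1/2`, the error `x² − φ_k(x)` lies in `[0, 1/(4k²)]`.
-/

open Finset

lemma sum_Icc_two_mul_sub_one (m : ℕ) : ∑ i ∈ Icc 1 m, (2 * (i : ℝ) - 1) = (m : ℝ) ^ 2 := by
  induction m with
  | zero => simp
  | succ n ih =>
    rw [sum_Icc_succ_top (by omega), ih]
    push_cast
    ring

lemma abs_sub_natFloor_add_half_le {y : ℝ} (hy : 0 ≤ y) : |y - ⌊y + 1 / 2⌋₊| ≤ 1 / 2 := by
  have hle : (⌊y + 1 / 2⌋₊ : ℝ) ≤ y + 1 / 2 := Nat.floor_le (by positivity)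
  have hlt : y + 1 / 2 < ⌊y + 1 / 2⌋₊ + 1 := Nat.lt_floor_add_one _
  rw [abs_le]
  constructor <;> linarith

lemma phiK_eq_zero_of_nonpos (k : ℕ) {x : ℝ} (hx : x ≤ 0) : phiK k x = 0 := by
  refine mul_eq_zero_of_right _ (sum_eq_zero fun i hi => ?_)
  have hi : (1 : ℝ) ≤ i := by exact_mod_cast (mem_Icc.1 hi).1
  have hb : 0 ≤ (2 * (i : ℝ) - 1) / (2 * k) := div_nonneg (by linarith) (by positivity)
  rw [max_eq_left (by linarith), mul_zero]

lemma phiK_nonneg (k : ℕ) (x : ℝ) : 0 ≤ phiK k x :=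
  mul_nonneg (by positivity) (sum_nonneg fun _ _ => by positivity)

lemma phiK_eq_sq_sub {k : ℕ} (hk : k ≠ 0) {x : ℝ} (hx0 : 0 ≤ x) (hx1 : x ≤ 1) :
    phiK k x = x ^ 2 - (k * x - ⌊k * x + 1 / 2⌋₊) ^ 2 / (k : ℝ) ^ 2 := by
  have hkpos : (0 : ℝ) < k := by positivity
  set m := ⌊(k : ℝ) * x + 1 / 2⌋₊ with hm
  have hy : (0 : ℝ) ≤ k * x + 1 / 2 := by positivity
  have hmk : m ≤ k := Nat.le_of_lt_succ ((Nat.floor_lt hy).2 (by push_cast; nlinarith))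
  have hterm : ∀ i : ℕ, 2 * max 0 (x - (2 * (i : ℝ) - 1) / (2 * k)) =
      if i ≤ m then 2 * x - (2 * (i : ℝ) - 1) / k else 0 := by
    intro i
    have hb : (2 * (i : ℝ) - 1) / (2 * k) ≤ x ↔ i ≤ m := by
      rw [hm, Nat.le_floor_iff hy, div_le_iff₀ (by positivity)]
      constructor <;> intro h <;> linarith
    split_ifs with hi
    · rw [max_eq_right (sub_nonneg.2 (hb.2 hi))]
      field_simp
    · rw [max_eq_left (sub_nonpos.2 (not_le.1 (mt hb.1 hi)).le), mul_zero]
  have hfilter : (Icc 1 k).filter (· ≤ m) = Icc 1 m := by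
    ext i
    simp only [mem_filter, mem_Icc]
    omega
  rw [phiK, sum_congr rfl fun i _ => hterm i, ← sum_filter, hfilter, sum_sub_distrib,
    sum_const, Nat.card_Icc, Nat.add_sub_cancel, nsmul_eq_mul, ← sum_div,
    sum_Icc_two_mul_sub_one]
  field_simp
  ring

lemma sq_sub_phiK_mem_Icc {k : ℕ} (hk : k ≠ 0) {x : ℝ} (hx0 : 0 ≤ x) (hx1 : x ≤ 1) :
    x ^ 2 - phiK k x ∈ Set.Icc 0 (1 / (4 * (k : ℝ) ^ 2)) := by
  have hkpos : (0 : ℝ) < k := by positivity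
  have hround : (k * x - ⌊k * x + 1 / 2⌋₊) ^ 2 ≤ (1 / 2 : ℝ) ^ 2 :=
    sq_le_sq.2 ((abs_sub_natFloor_add_half_le (by positivity)).trans (abs_of_pos one_half_pos).ge)
  rw [phiK_eq_sq_sub hk hx0 hx1, sub_sub_cancel]
  refine ⟨by positivity, ?_⟩
  rw [div_le_div_iff₀ (by positivity) (by positivity)]
  nlinarith

/-- For every `k ≥ 1`: `φ_k(x) = 0` for `x ≤ 0`; `φ_k(x) ∈ [0,1]` for
`x ∈ [0,1]`; and `|x² − φ_k(x)| ≤ 1/(2k²)` for `x ∈ [0,1]`. -/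
theorem phiK_properties (k : ℕ) (hk : 1 ≤ k) :
    (∀ x : ℝ, x ≤ 0 → phiK k x = 0) ∧
    (∀ x ∈ Set.Icc (0 : ℝ) 1, phiK k x ∈ Set.Icc (0 : ℝ) 1) ∧
    (∀ x ∈ Set.Icc (0 : ℝ) 1, |x ^ 2 - phiK k x| ≤ 1 / (2 * (k : ℝ) ^ 2)) := by
  have hk0 : k ≠ 0 := by omega
  refine ⟨fun x hx => phiK_eq_zero_of_nonpos k hx, fun x ⟨hx0, hx1⟩ => ?_,
    fun x ⟨hx0, hx1⟩ => ?_⟩ <;>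
  obtain ⟨herr0, herr1⟩ := sq_sub_phiK_mem_Icc hk0 hx0 hx1
  · exact ⟨phiK_nonneg k x, by nlinarith⟩
  · rw [abs_of_nonneg herr0]
    refine herr1.trans (one_div_le_one_div_of_le (by positivity) ?_)
    linarith [sq_nonneg (k : ℝ)]
end
end
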